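/- Assume v > 2. There exists a constant C' > 0 such that for all integers n ≥ 1 and 1 ≤ j ≤ n, the sum over all pairs (i, i') with 0 ≤ i ≤ n−j, 0 ≤ i' ≤ n−j and i + j < i' of |E[(U_{i+j} − U_i)(U_{i'+j} − U_{i'})]| is at most C' n. -/

import Mathlib

open MeasureTheory ProbabilityTheory Filter Finset
open scoped ProbabilityTheory ENNReal NNReal BigOperators

namespace DepNoise

variable {Ω : Type*} [MeasureSpace Ω]

/-- Variance of `U 0`. -/
noncomputable def varU (U : ℕ → Ω → ℝ) : ℝ :=
  (∫ ω, (U 0 ω) ^ 2) - (∫ ω, U 0 ω) ^ 2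

/-- Autocovariance `γ(h) = Cov(U 0, U h)`. -/
noncomputable def gammaCov (U : ℕ → Ω → ℝ) (h : ℕ) : ℝ :=
  (∫ ω, U 0 ω * U h ω) - (∫ ω, U 0 ω) * (∫ ω, U h ω)

/-- The σ-algebra `σ(U 0, …, U k)`. -/
def pastSigma (U : ℕ → Ω → ℝ) (k : ℕ) : MeasurableSpace Ω :=
  ⨆ i : Fin (k + 1), MeasurableSpace.comap (U i) inferInstance

/-- The σ-algebra `σ(U m, U (m+1), …)`. -/
def futureSigma (U : ℕ → Ω → ℝ) (m : ℕ) : MeasurableSpace Ω :=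
  ⨆ i : ℕ, MeasurableSpace.comap (U (m + i)) inferInstance

end DepNoise

/-!
Fix a gap `h = i' - (i + j) ≥ 1`. The increment `X = U (i + j) - U i` is measurable for the past
σ-algebra `σ(U 0, …, U (i + j))` and `Y = U (i' + j) - U i'` for the future one from `i'`, so
events of `X` and `Y` are `C h^{-v}`-mixing. For variables bounded by `M` whose events are
`α`-mixing, `|Cov(X, Y)| ≤ 4 α M²`: writing `X + M = ∫_{-M}^{M} 1{t ≤ X} dt` and using Fubini, the
covariance is an average of covariances of indicators. Truncating at `M = √h`, with fifth moments
for the tails and `E X = 0` from stationarity, gives `|E[XY]| ≤ 4 C h^{1-v} + c h^{-3/2}`. Both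
exponents are `< -1` since `v > 2`, so every row of the double sum is bounded by one convergent
series, and there are at most `n` rows.
-/

section Elementary

lemma pow_mul_pow_le_pow_add_pow {a b : ℝ} (ha : 0 ≤ a) (hb : 0 ≤ b) (m n : ℕ) :
    a ^ m * b ^ n ≤ a ^ (m + n) + b ^ (m + n) := by
  rcases le_total a b with hab | hab
  · calc a ^ m * b ^ n ≤ b ^ m * b ^ n := by gcongr
      _ = b ^ (m + n) := (pow_add b m n).symm
      _ ≤ _ := le_add_of_nonneg_left (by positivity)
  · calc a ^ m * b ^ n ≤ a ^ m * a ^ n := by gcongr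
      _ = a ^ (m + n) := (pow_add a m n).symm
      _ ≤ _ := le_add_of_nonneg_right (by positivity)

lemma abs_sub_truncation_le {α : Type*} (f : α → ℝ) {M : ℝ} (hM : 0 < M) (x : α) :
    |f x - truncation f M x| ≤ |f x| ^ 4 / M ^ 3 := by
  rw [le_div_iff₀ (by positivity)]
  by_cases hx : f x ∈ Set.Ioc (-M) M
  · simp only [truncation, Function.comp_apply, Set.indicator_of_mem hx, id, sub_self, abs_zero,
      zero_mul]
    positivity
  · have hMx : M ≤ |f x| := by
      by_contra! h
      exact hx ⟨(abs_lt.mp h).1, (abs_lt.mp h).2.le⟩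
    simp only [truncation, Function.comp_apply, Set.indicator_of_notMem hx, sub_zero]
    calc |f x| * M ^ 3 ≤ |f x| * |f x| ^ 3 := by gcongr
      _ = |f x| ^ 4 := by ring

lemma abs_mul_sub_mul_le_of_abs_sub_le {x y x' y' M : ℝ} (hM : 0 < M)
    (hx : |x - x'| ≤ |x| ^ 4 / M ^ 3) (hy : |y - y'| ≤ |y| ^ 4 / M ^ 3) (hx' : |x'| ≤ |x|) :
    |x * y - x' * y'| ≤ 2 * (|x| ^ 5 + |y| ^ 5) / M ^ 3 := by
  have hxy := pow_mul_pow_le_pow_add_pow (abs_nonneg x) (abs_nonneg y) 4 1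
  have hyx := pow_mul_pow_le_pow_add_pow (abs_nonneg y) (abs_nonneg x) 4 1
  calc |x * y - x' * y'| = |(x - x') * y + x' * (y - y')| := by ring_nf
    _ ≤ |x - x'| * |y| + |x'| * |y - y'| := by
        rw [← abs_mul, ← abs_mul]; exact abs_add_le _ _
    _ ≤ |x| ^ 4 / M ^ 3 * |y| + |x| * (|y| ^ 4 / M ^ 3) := by gcongr
    _ = (|x| ^ 4 * |y| ^ 1 + |y| ^ 4 * |x| ^ 1) / M ^ 3 := by ring
    _ ≤ 2 * (|x| ^ 5 + |y| ^ 5) / M ^ 3 := by gcongr; norm_num at hxy hyx; linarith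

lemma setIntegral_Ioc_indicator_Iic {M x : ℝ} (hx : |x| ≤ M) :
    ∫ t in Set.Ioc (-M) M, (Set.Iic x).indicator 1 t = x + M := by
  obtain ⟨hMx, hxM⟩ := abs_le.mp hx
  rw [setIntegral_indicator measurableSet_Iic, Set.Ioc_inter_Iic, min_eq_right hxM,
    Pi.one_def, setIntegral_const, Real.volume_real_Ioc_of_le hMx]
  simp

end Elementary

section Moments

variable {Ω : Type*} {mΩ : MeasurableSpace Ω} {μ : Measure Ω}

lemma memLp_of_integrable_abs_pow {X : Ω → ℝ} {p : ℕ} (hp : p ≠ 0)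
    (hX : AEStronglyMeasurable X μ) (h : Integrable (fun ω => |X ω| ^ p) μ) : MemLp X p μ := by
  rw [← integrable_norm_rpow_iff hX (by simpa using hp) (by simp)]
  simpa [Real.norm_eq_abs] using h

variable [IsFiniteMeasure μ]

lemma integral_abs_sub_pow_le {X Y : Ω → ℝ} {p : ℕ} (hX : MemLp X p μ) (hY : MemLp Y p μ) :
    ∫ ω, |X ω - Y ω| ^ p ∂μ ≤ 2 ^ (p - 1) * (∫ ω, |X ω| ^ p ∂μ + ∫ ω, |Y ω| ^ p ∂μ) := by
  have hXp : Integrable (fun ω => |X ω| ^ p) μ := by simpa using hX.integrable_norm_pow'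
  have hYp : Integrable (fun ω => |Y ω| ^ p) μ := by simpa using hY.integrable_norm_pow'
  rw [← integral_add hXp hYp, ← integral_const_mul]
  refine integral_mono (by simpa using (hX.sub hY).integrable_norm_pow')
    ((hXp.add hYp).const_mul _) fun ω => ?_
  calc |X ω - Y ω| ^ p ≤ (|X ω| + |Y ω|) ^ p := by gcongr; exact abs_sub _ _
    _ ≤ _ := add_pow_le (abs_nonneg _) (abs_nonneg _) p

lemma integral_abs_sub_pow_le_of_identDistrib {X Y Z : Ω → ℝ} {p : ℕ} (hp : 1 ≤ p)
    (hXZ : IdentDistrib X Z μ μ) (hYZ : IdentDistrib Y Z μ μ) (hZ : MemLp Z p μ) :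
    ∫ ω, |X ω - Y ω| ^ p ∂μ ≤ 2 ^ p * ∫ ω, |Z ω| ^ p ∂μ := by
  have hmom {W : Ω → ℝ} (hW : IdentDistrib W Z μ μ) :
      ∫ ω, |W ω| ^ p ∂μ = ∫ ω, |Z ω| ^ p ∂μ :=
    (hW.comp (measurable_abs.pow_const p)).integral_eq
  calc ∫ ω, |X ω - Y ω| ^ p ∂μ ≤ 2 ^ (p - 1) * (∫ ω, |X ω| ^ p ∂μ + ∫ ω, |Y ω| ^ p ∂μ) :=
        integral_abs_sub_pow_le (hXZ.memLp_iff.mpr hZ) (hYZ.memLp_iff.mpr hZ)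
    _ = 2 ^ p * ∫ ω, |Z ω| ^ p ∂μ := by
        rw [hmom hXZ, hmom hYZ, ← two_mul, ← mul_assoc, ← pow_succ, Nat.sub_add_cancel hp]

lemma integral_abs_pow_le_integral_abs_pow_add_measureReal {X : Ω → ℝ} {n p : ℕ} (hnp : n ≤ p)
    (hX : MemLp X p μ) : ∫ ω, |X ω| ^ n ∂μ ≤ ∫ ω, |X ω| ^ p ∂μ + μ.real Set.univ := by
  have hXp : Integrable (fun ω => |X ω| ^ p) μ := by simpa using hX.integrable_norm_pow'
  have hXn : Integrable (fun ω => |X ω| ^ n) μ := by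
    simpa using (hX.mono_exponent (by exact_mod_cast hnp)).integrable_norm_pow'
  calc ∫ ω, |X ω| ^ n ∂μ ≤ ∫ ω, (|X ω| ^ p + 1) ∂μ := by
        refine integral_mono hXn (hXp.add (integrable_const 1)) fun ω => ?_
        simpa [Nat.add_sub_cancel' hnp] using
          pow_mul_pow_le_pow_add_pow (abs_nonneg (X ω)) zero_le_one n (p - n)
    _ = ∫ ω, |X ω| ^ p ∂μ + μ.real Set.univ := by
        simp [integral_add hXp (integrable_const 1)]

end Moments

section Covariance

variable {Ω : Type*} {mΩ : MeasurableSpace Ω} {μ : Measure Ω} [IsProbabilityMeasure μ]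

lemma covariance_indicator_one {A B : Set Ω} (hA : MeasurableSet A) (hB : MeasurableSet B) :
    cov[A.indicator 1, B.indicator 1; μ] = μ.real (A ∩ B) - μ.real A * μ.real B := by
  have hL2 : ∀ s, MeasurableSet s → MemLp (s.indicator (1 : Ω → ℝ)) 2 μ :=
    fun s hs => (memLp_const 1).indicator hs
  rw [covariance_eq_sub (hL2 A hA) (hL2 B hB), ← Set.inter_indicator_one,
    integral_indicator_one hA, integral_indicator_one hB, integral_indicator_one (hA.inter hB)]

variable {T T' : Type*} [MeasurableSpace T] [MeasurableSpace T'] {ν : Measure T}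
  {ν' : Measure T'} [IsFiniteMeasure ν] [IsFiniteMeasure ν']

lemma covariance_integral_integral {f : T → Ω → ℝ} {g : T' → Ω → ℝ}
    (hf : Measurable (Function.uncurry f)) (hg : Measurable (Function.uncurry g)) {c d : ℝ}
    (hfc : ∀ t ω, |f t ω| ≤ c) (hgd : ∀ s ω, |g s ω| ≤ d) :
    cov[fun ω => ∫ t, f t ω ∂ν, fun ω => ∫ s, g s ω ∂ν'; μ]
      = ∫ p, cov[f p.1, g p.2; μ] ∂(ν.prod ν') := by
  have hF : Integrable (Function.uncurry fun ω t => f t ω) (μ.prod ν) :=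
    .of_bound (hf.comp measurable_swap).aestronglyMeasurable c (ae_of_all _ fun z => hfc _ _)
  have hG : Integrable (Function.uncurry fun ω s => g s ω) (μ.prod ν') :=
    .of_bound (hg.comp measurable_swap).aestronglyMeasurable d (ae_of_all _ fun z => hgd _ _)
  have hFG : Integrable (Function.uncurry fun ω (p : T × T') => f p.1 ω * g p.2 ω)
      (μ.prod (ν.prod ν')) := by
    refine .of_bound ?_ (c * d) (ae_of_all _ fun z => ?_)
    · exact ((hf.comp (measurable_snd.fst.prodMk measurable_fst)).mul
        (hg.comp (measurable_snd.snd.prodMk measurable_fst))).aestronglyMeasurable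
    · change |f z.2.1 z.1 * g z.2.2 z.1| ≤ c * d
      rw [abs_mul]
      exact mul_le_mul (hfc _ _) (hgd _ _) (abs_nonneg _) ((abs_nonneg _).trans (hfc z.2.1 z.1))
  have hFL2 : MemLp (fun ω => ∫ t, f t ω ∂ν) 2 μ :=
    .of_bound (hf.comp measurable_swap).stronglyMeasurable.integral_prod_right'.aestronglyMeasurable
      (c * ν.real Set.univ)
      (ae_of_all _ fun ω => norm_integral_le_of_norm_le_const (ae_of_all _ fun t => hfc t ω))
  have hGL2 : MemLp (fun ω => ∫ s, g s ω ∂ν') 2 μ :=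
    .of_bound (hg.comp measurable_swap).stronglyMeasurable.integral_prod_right'.aestronglyMeasurable
      (d * ν'.real Set.univ)
      (ae_of_all _ fun ω => norm_integral_le_of_norm_le_const (ae_of_all _ fun s => hgd s ω))
  have hfL2 (t : T) : MemLp (f t) 2 μ :=
    .of_bound (hf.comp measurable_prodMk_left).aestronglyMeasurable c (ae_of_all _ (hfc t))
  have hgL2 (s : T') : MemLp (g s) 2 μ :=
    .of_bound (hg.comp measurable_prodMk_left).aestronglyMeasurable d (ae_of_all _ (hgd s))
  have hmul : μ[(fun ω => ∫ t, f t ω ∂ν) * fun ω => ∫ s, g s ω ∂ν']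
      = ∫ p, μ[f p.1 * g p.2] ∂(ν.prod ν') := by
    simp_rw [Pi.mul_apply, ← integral_prod_mul]
    exact integral_integral_swap hFG
  rw [covariance_eq_sub hFL2 hGL2, hmul, integral_integral_swap hF, integral_integral_swap hG,
    ← integral_prod_mul, ← integral_sub]
  · exact integral_congr_ae (ae_of_all _ fun p => (covariance_eq_sub (hfL2 _) (hgL2 _)).symm)
  · exact hFG.integral_prod_right
  · exact hF.integral_prod_right.mul_prod hG.integral_prod_right

theorem abs_covariance_le_of_mixing {X Y : Ω → ℝ} (hX : Measurable X) (hY : Measurable Y)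
    {α : ℝ} (hmix : ∀ s t : Set ℝ, MeasurableSet s → MeasurableSet t →
      |μ.real (X ⁻¹' s ∩ Y ⁻¹' t) - μ.real (X ⁻¹' s) * μ.real (Y ⁻¹' t)| ≤ α)
    {M : ℝ} (hXM : ∀ ω, |X ω| ≤ M) (hYM : ∀ ω, |Y ω| ≤ M) :
    |cov[X, Y; μ]| ≤ 4 * α * M ^ 2 := by
  have hM : 0 ≤ M := (abs_nonneg _).trans (hXM (nonempty_of_isProbabilityMeasure μ).some)
  set ν := volume.restrict (Set.Ioc (-M) M)
  let f : ℝ → Ω → ℝ := fun t => (X ⁻¹' Set.Ici t).indicator 1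
  let g : ℝ → Ω → ℝ := fun s => (Y ⁻¹' Set.Ici s).indicator 1
  have hf : Measurable (Function.uncurry f) :=
    measurable_one.indicator (measurableSet_le measurable_fst (hX.comp measurable_snd))
  have hg : Measurable (Function.uncurry g) :=
    measurable_one.indicator (measurableSet_le measurable_fst (hY.comp measurable_snd))
  have hlayerX : (fun ω => ∫ t, f t ω ∂ν) = fun ω => X ω + M := funext fun ω => by
    rw [← setIntegral_Ioc_indicator_Iic (hXM ω)]
    congr with t
  have hlayerY : (fun ω => ∫ s, g s ω ∂ν) = fun ω => Y ω + M := funext fun ω => by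
    rw [← setIntegral_Ioc_indicator_Iic (hYM ω)]
    congr with t
  have hind (s : Set Ω) (ω : Ω) : |s.indicator (1 : Ω → ℝ) ω| ≤ 1 := by
    by_cases hω : ω ∈ s <;> simp [hω]
  have hcov : cov[X, Y; μ] = ∫ p, cov[f p.1, g p.2; μ] ∂(ν.prod ν) := by
    rw [← covariance_integral_integral (ν := ν) (ν' := ν) hf hg (fun _ => hind _)
      (fun _ => hind _), hlayerX, hlayerY,
      covariance_add_const_left (.of_bound hX.aestronglyMeasurable M (ae_of_all _ hXM)),
      covariance_add_const_right (.of_bound hY.aestronglyMeasurable M (ae_of_all _ hYM))]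
  have hν : ν.real Set.univ = 2 * M := by
    rw [measureReal_restrict_apply_univ, Real.volume_real_Ioc_of_le (by linarith)]
    ring
  calc |cov[X, Y; μ]| ≤ α * (ν.prod ν).real Set.univ := by
        rw [hcov, ← Real.norm_eq_abs]
        refine norm_integral_le_of_norm_le_const (ae_of_all _ fun p => ?_)
        rw [Real.norm_eq_abs,
          covariance_indicator_one (hX measurableSet_Ici) (hY measurableSet_Ici)]
        exact hmix _ _ measurableSet_Ici measurableSet_Ici
    _ = 4 * α * M ^ 2 := by
        rw [← Set.univ_prod_univ, measureReal_prod_prod, hν]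
        ring

end Covariance

section Truncation

variable {Ω : Type*} {mΩ : MeasurableSpace Ω} {μ : Measure Ω} {X Y : Ω → ℝ} {M : ℝ}

lemma abs_integral_mul_sub_integral_truncation_mul_le [IsFiniteMeasure μ] (hX : MemLp X 5 μ)
    (hY : MemLp Y 5 μ) (hM : 0 < M) :
    |∫ ω, X ω * Y ω ∂μ - ∫ ω, truncation X M ω * truncation Y M ω ∂μ|
      ≤ 2 * (∫ ω, |X ω| ^ 5 ∂μ + ∫ ω, |Y ω| ^ 5 ∂μ) / M ^ 3 := by
  have hX5 : Integrable (fun ω => |X ω| ^ 5) μ := by simpa using hX.integrable_norm_pow'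
  have hY5 : Integrable (fun ω => |Y ω| ^ 5) μ := by simpa using hY.integrable_norm_pow'
  have hXY : Integrable (fun ω => X ω * Y ω) μ :=
    (hX.mono_exponent (p := 2) (by norm_num)).integrable_mul
      (hY.mono_exponent (p := 2) (by norm_num))
  have hXYM : Integrable (fun ω => truncation X M ω * truncation Y M ω) μ :=
    hX.1.memLp_truncation.integrable_mul (p := 2) (q := 2) hY.1.memLp_truncation
  rw [← integral_sub hXY hXYM, ← integral_add hX5 hY5, ← integral_const_mul, ← integral_div]
  refine abs_integral_le_integral_abs.trans (integral_mono (hXY.sub hXYM).abs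
    (((hX5.add hY5).const_mul 2).div_const _) fun ω => ?_)
  exact abs_mul_sub_mul_le_of_abs_sub_le hM (abs_sub_truncation_le X hM ω)
    (abs_sub_truncation_le Y hM ω) (abs_truncation_le_abs_self X M ω)

variable [IsProbabilityMeasure μ]

lemma abs_integral_truncation_le_of_integral_eq_zero (hX : MemLp X 5 μ) (hX0 : μ[X] = 0)
    (hM : 0 < M) : |∫ ω, truncation X M ω ∂μ| ≤ (∫ ω, |X ω| ^ 5 ∂μ + 1) / M ^ 3 := by
  have hXi : Integrable X μ := hX.integrable (by norm_num)
  have hX4 : Integrable (fun ω => |X ω| ^ 4) μ := by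
    simpa using (hX.mono_exponent (p := 4) (by norm_num)).integrable_norm_pow'
  have h45 := integral_abs_pow_le_integral_abs_pow_add_measureReal (by norm_num : 4 ≤ 5) hX
  rw [probReal_univ] at h45
  calc |∫ ω, truncation X M ω ∂μ| = |∫ ω, (X ω - truncation X M ω) ∂μ| := by
        rw [integral_sub hXi hX.1.integrable_truncation, hX0, zero_sub, abs_neg]
    _ ≤ ∫ ω, |X ω| ^ 4 / M ^ 3 ∂μ :=
        abs_integral_le_integral_abs.trans (integral_mono
          (hXi.sub hX.1.integrable_truncation).abs (hX4.div_const _) (abs_sub_truncation_le X hM))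
    _ ≤ (∫ ω, |X ω| ^ 5 ∂μ + 1) / M ^ 3 := by
        rw [integral_div]
        gcongr

lemma abs_integral_truncation_le (hX : MemLp X 5 μ) (M : ℝ) :
    |∫ ω, truncation X M ω ∂μ| ≤ ∫ ω, |X ω| ^ 5 ∂μ + 1 := by
  have h15 := integral_abs_pow_le_integral_abs_pow_add_measureReal (by norm_num : 1 ≤ 5) hX
  simp only [pow_one, probReal_univ] at h15
  exact abs_integral_le_integral_abs.trans (le_trans (integral_mono
    hX.1.integrable_truncation.abs (hX.integrable (by norm_num)).abs
    (abs_truncation_le_abs_self X M)) h15)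

theorem abs_integral_mul_le_of_mixing (hX : Measurable X) (hY : Measurable Y)
    {α : ℝ} (hmix : ∀ s t : Set ℝ, MeasurableSet s → MeasurableSet t →
      |μ.real (X ⁻¹' s ∩ Y ⁻¹' t) - μ.real (X ⁻¹' s) * μ.real (Y ⁻¹' t)| ≤ α)
    (hX5 : MemLp X 5 μ) (hY5 : MemLp Y 5 μ) (hX0 : μ[X] = 0) {K : ℝ}
    (hXK : ∫ ω, |X ω| ^ 5 ∂μ ≤ K) (hYK : ∫ ω, |Y ω| ^ 5 ∂μ ≤ K) (hM : 0 < M) :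
    |∫ ω, X ω * Y ω ∂μ| ≤ 4 * α * M ^ 2 + (4 * K + (K + 1) ^ 2) / M ^ 3 := by
  set XM := truncation X M
  set YM := truncation Y M
  have hK : 0 ≤ K := (integral_nonneg fun ω => by positivity).trans hXK
  have hφ : Measurable ((Set.Ioc (-M) M).indicator (id : ℝ → ℝ)) :=
    measurable_id.indicator measurableSet_Ioc
  have hbound (Z : Ω → ℝ) (ω : Ω) : |truncation Z M ω| ≤ M :=
    (abs_truncation_le_bound Z M ω).trans (abs_of_pos hM).le
  have hcov : |∫ ω, XM ω * YM ω ∂μ - (∫ ω, XM ω ∂μ) * ∫ ω, YM ω ∂μ| ≤ 4 * α * M ^ 2 := by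
    have := abs_covariance_le_of_mixing (μ := μ) (X := XM) (Y := YM) (hφ.comp hX) (hφ.comp hY)
      (fun s t hs ht => hmix ((Set.Ioc (-M) M).indicator id ⁻¹' s)
        ((Set.Ioc (-M) M).indicator id ⁻¹' t) (hφ hs) (hφ ht)) (hbound X) (hbound Y)
    rwa [covariance_eq_sub (X := XM) (Y := YM) hX5.1.memLp_truncation
      hY5.1.memLp_truncation] at this
  have herr : |∫ ω, X ω * Y ω ∂μ - ∫ ω, XM ω * YM ω ∂μ| ≤ 4 * K / M ^ 3 :=
    (abs_integral_mul_sub_integral_truncation_mul_le hX5 hY5 hM).trans (by gcongr ?_ / _; linarith)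
  have hXM : |∫ ω, XM ω ∂μ| ≤ (K + 1) / M ^ 3 :=
    (abs_integral_truncation_le_of_integral_eq_zero hX5 hX0 hM).trans (by gcongr)
  have hYM : |∫ ω, YM ω ∂μ| ≤ K + 1 := (abs_integral_truncation_le hY5 M).trans (by linarith)
  calc |∫ ω, X ω * Y ω ∂μ|
      = |(∫ ω, X ω * Y ω ∂μ - ∫ ω, XM ω * YM ω ∂μ)
          + (∫ ω, XM ω * YM ω ∂μ - (∫ ω, XM ω ∂μ) * ∫ ω, YM ω ∂μ)
          + (∫ ω, XM ω ∂μ) * ∫ ω, YM ω ∂μ| := by ring_nf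
    _ ≤ 4 * K / M ^ 3 + 4 * α * M ^ 2 + (K + 1) / M ^ 3 * (K + 1) := by
        refine (abs_add_three _ _ _).trans ?_
        rw [abs_mul]
        gcongr
    _ = 4 * α * M ^ 2 + (4 * K + (K + 1) ^ 2) / M ^ 3 := by ring

end Truncation

lemma sum_range_sum_range_ite_le_mul_tsum {g : ℕ → ℝ} (hg : ∀ h, 0 ≤ g h) (hgs : Summable g)
    {F : ℕ → ℕ → ℝ} {j : ℕ} (hF : ∀ i i', i + j < i' → F i i' ≤ g (i' - (i + j))) (N : ℕ) :
    ∑ i ∈ range N, ∑ i' ∈ range N, (if i + j < i' then F i i' else 0) ≤ N * ∑' h, g h := by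
  have hrow (i : ℕ) : ∑ i' ∈ range N, (if i + j < i' then F i i' else 0) ≤ ∑' h, g h := by
    rw [← sum_filter]
    calc ∑ i' ∈ (range N).filter (i + j < ·), F i i'
        ≤ ∑ i' ∈ (range N).filter (i + j < ·), g (i' - (i + j)) :=
          sum_le_sum fun i' hi' => hF i i' (mem_filter.mp hi').2
      _ = ∑ h ∈ ((range N).filter (i + j < ·)).image (· - (i + j)), g h := by
          refine (sum_image fun a ha b hb hab => ?_).symm
          rw [mem_coe, mem_filter] at ha hb
          omega
      _ ≤ ∑' h, g h := hgs.sum_le_tsum _ fun h _ => hg h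
  calc _ ≤ ∑ _i ∈ range N, ∑' h, g h := sum_le_sum fun i _ => hrow i
    _ = N * ∑' h, g h := by simp

namespace DepNoise

section Sigma

variable {Ω : Type*} {mΩ : MeasurableSpace Ω} {U : ℕ → Ω → ℝ}

lemma pastSigma_le (hU : ∀ i, Measurable (U i)) (k : ℕ) : pastSigma U k ≤ mΩ :=
  iSup_le fun i => (hU i).comap_le

lemma futureSigma_le (hU : ∀ i, Measurable (U i)) (m : ℕ) : futureSigma U m ≤ mΩ :=
  iSup_le fun i => (hU (m + i)).comap_le

lemma measurable_pastSigma {m k : ℕ} (hmk : m ≤ k) : Measurable[pastSigma U k] (U m) :=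
  Measurable.of_comap_le <|
    le_iSup (fun i : Fin (k + 1) => MeasurableSpace.comap (U i) inferInstance) ⟨m, by omega⟩

lemma measurable_futureSigma (m i : ℕ) : Measurable[futureSigma U m] (U (m + i)) :=
  Measurable.of_comap_le <| le_iSup (fun i => MeasurableSpace.comap (U (m + i)) inferInstance) i

end Sigma

noncomputable def crossBound (C v K : ℝ) (h : ℕ) : ℝ :=
  4 * C * (h : ℝ) ^ (1 - v) + (4 * K + (K + 1) ^ 2) * (h : ℝ) ^ (-(3 / 2) : ℝ)

lemma crossBound_nonneg {C K : ℝ} (hC : 0 ≤ C) (hK : 0 ≤ K) (v : ℝ) (h : ℕ) :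
    0 ≤ crossBound C v K h := by
  unfold crossBound
  positivity

lemma summable_crossBound (C : ℝ) {v : ℝ} (hv : 2 < v) (K : ℝ) : Summable (crossBound C v K) :=
  ((Real.summable_nat_rpow.mpr (by linarith)).mul_left _).add
    ((Real.summable_nat_rpow.mpr (by norm_num)).mul_left _)

variable {Ω : Type*} {mΩ : MeasurableSpace Ω} {μ : Measure Ω} {U : ℕ → Ω → ℝ}

lemma identDistrib_of_stationary (hU : ∀ i, Measurable (U i))
    (hStat : ∀ k n : ℕ,
      Measure.map (fun ω => fun i : Fin (n + 1) => U (k + i) ω) μ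
        = Measure.map (fun ω => fun i : Fin (n + 1) => U i ω) μ) (a : ℕ) :
    IdentDistrib (U a) (U 0) μ μ where
  aemeasurable_fst := (hU a).aemeasurable
  aemeasurable_snd := (hU 0).aemeasurable
  map_eq := by
    have h := congrArg (Measure.map fun x : Fin 1 → ℝ => x 0) (hStat a 0)
    rwa [Measure.map_map (measurable_pi_apply 0) (measurable_pi_lambda _ fun i => hU _),
      Measure.map_map (measurable_pi_apply 0) (measurable_pi_lambda _ fun i => hU _)] at h

lemma abs_integral_increments_mul_le [IsProbabilityMeasure μ] (hU : ∀ i, Measurable (U i))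
    (hid : ∀ a, IdentDistrib (U a) (U 0) μ μ) (hU0 : MemLp (U 0) 5 μ) {C v : ℝ}
    (hMix : ∀ k h : ℕ, 1 ≤ h → ∀ A B : Set Ω,
      MeasurableSet[pastSigma U k] A → MeasurableSet[futureSigma U (k + h)] B →
      |(μ (A ∩ B)).toReal - (μ A).toReal * (μ B).toReal| ≤ C * (h : ℝ) ^ (-v))
    {i j i' : ℕ} (hii' : i + j < i') :
    |∫ ω, (U (i + j) ω - U i ω) * (U (i' + j) ω - U i' ω) ∂μ|
      ≤ crossBound C v (2 ^ 5 * ∫ ω, |U 0 ω| ^ 5 ∂μ) (i' - (i + j)) := by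
  set h := i' - (i + j)
  have hh : (0 : ℝ) < h := by exact_mod_cast (by omega : 0 < h)
  have hU5 (a : ℕ) : MemLp (U a) 5 μ := (hid a).memLp_iff.mpr hU0
  have hmoment (a b : ℕ) : ∫ ω, |U a ω - U b ω| ^ 5 ∂μ ≤ 2 ^ 5 * ∫ ω, |U 0 ω| ^ 5 ∂μ :=
    integral_abs_sub_pow_le_of_identDistrib (by norm_num) (hid a) (hid b) hU0
  have hmean : ∫ ω, U (i + j) ω - U i ω ∂μ = 0 := by
    rw [integral_sub ((hU5 _).integrable (by norm_num)) ((hU5 _).integrable (by norm_num)),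
      (hid (i + j)).integral_eq, (hid i).integral_eq, sub_self]
  have hX : Measurable[pastSigma U (i + j)] fun ω => U (i + j) ω - U i ω :=
    (measurable_pastSigma le_rfl).sub (measurable_pastSigma (by omega))
  have hY : Measurable[futureSigma U (i + j + h)] fun ω => U (i' + j) ω - U i' ω := by
    rw [show i + j + h = i' by omega]
    exact (measurable_futureSigma i' j).sub (by simpa using measurable_futureSigma (U := U) i' 0)
  have key := abs_integral_mul_le_of_mixing (hX.mono (pastSigma_le hU _) le_rfl)
    (hY.mono (futureSigma_le hU _) le_rfl) (α := C * (h : ℝ) ^ (-v))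
    (fun s t hs ht => hMix _ _ (by omega) _ _ (hX hs) (hY ht)) ((hU5 _).sub (hU5 _))
    ((hU5 _).sub (hU5 _)) hmean (hmoment _ _) (hmoment _ _) (Real.sqrt_pos.mpr hh)
  refine key.trans (le_of_eq ?_)
  have hsq : (h : ℝ) ^ (-v) * Real.sqrt h ^ 2 = (h : ℝ) ^ (1 - v) := by
    rw [Real.sq_sqrt hh.le, sub_eq_neg_add, Real.rpow_add hh, Real.rpow_one]
  have hcube : (Real.sqrt h ^ 3)⁻¹ = (h : ℝ) ^ (-(3 / 2) : ℝ) := by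
    rw [Real.rpow_neg hh.le, Real.sqrt_eq_rpow, ← Real.rpow_natCast, ← Real.rpow_mul hh.le]
    norm_num
  rw [crossBound, ← hsq, ← hcube]
  ring

theorem cross_terms_sum_bound_general
    {Ω : Type*} [MeasureSpace Ω] [IsProbabilityMeasure (ℙ : Measure Ω)]
    (U : ℕ → Ω → ℝ)
    (hMeas : ∀ i, Measurable (U i))
    (hStat : ∀ k n : ℕ,
      Measure.map (fun ω => fun i : Fin (n + 1) => U (k + i) ω) ℙ
        = Measure.map (fun ω => fun i : Fin (n + 1) => U i ω) ℙ)
    (hMom : ∀ p : ℕ, 1 ≤ p → Integrable (fun ω => |U 0 ω| ^ p) ℙ)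
    (C v : ℝ) (hC : 0 < C)
    (hMix : ∀ k h : ℕ, 1 ≤ h → ∀ A B : Set Ω,
      MeasurableSet[pastSigma U k] A → MeasurableSet[futureSigma U (k + h)] B →
      |(ℙ (A ∩ B)).toReal - (ℙ A).toReal * (ℙ B).toReal| ≤ C * (h : ℝ) ^ (-v))
    (hv : 2 < v) :
    ∃ C' > (0 : ℝ), ∀ n j : ℕ, 1 ≤ n → 1 ≤ j → j ≤ n →
      ∑ i ∈ Finset.range (n - j + 1), ∑ i' ∈ Finset.range (n - j + 1),
        (if i + j < i' then
          |∫ ω, (U (i + j) ω - U i ω) * (U (i' + j) ω - U i' ω) ∂ℙ| else 0)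
        ≤ C' * n := by
  have hid := identDistrib_of_stationary hMeas hStat
  have hU0 : MemLp (U 0) 5 ℙ :=
    memLp_of_integrable_abs_pow (by norm_num) (hMeas 0).aestronglyMeasurable (hMom 5 (by norm_num))
  set K := 2 ^ 5 * ∫ ω, |U 0 ω| ^ 5
  have hK : 0 ≤ K := mul_nonneg (by norm_num) (integral_nonneg fun ω => by positivity)
  have hg := crossBound_nonneg hC.le hK v
  have hS : 0 ≤ ∑' h, crossBound C v K h := tsum_nonneg hg
  refine ⟨∑' h, crossBound C v K h + 1, by positivity, fun n j _ _ hjn => ?_⟩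
  calc _ ≤ ((n - j + 1 : ℕ) : ℝ) * ∑' h, crossBound C v K h :=
        sum_range_sum_range_ite_le_mul_tsum hg (summable_crossBound C hv K)
          (fun i i' hii' => abs_integral_increments_mul_le hMeas hid hU0 hMix hii') _
    _ ≤ (∑' h, crossBound C v K h + 1) * n := by
        have hN : ((n - j + 1 : ℕ) : ℝ) ≤ n := by exact_mod_cast (by omega : n - j + 1 ≤ n)
        nlinarith

/-- assuming `v > 2`, the sum over pairs `(i, i')` with
`0 ≤ i, i' ≤ n − j` and `i + j < i'` of `|E[(U_{i+j} − U_i)(U_{i'+j} − U_{i'})]|`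
is at most `C' n`. -/
theorem cross_terms_sum_bound
    {Ω : Type*} [MeasureSpace Ω] [IsProbabilityMeasure (ℙ : Measure Ω)]
    (U : ℕ → Ω → ℝ)
    (hMeas : ∀ i, Measurable (U i))
    (hStat : ∀ k n : ℕ,
      Measure.map (fun ω => fun i : Fin (n + 1) => U (k + i) ω) ℙ
        = Measure.map (fun ω => fun i : Fin (n + 1) => U i ω) ℙ)
    (hSymm : Measure.map (U 0) ℙ = Measure.map (fun ω => -U 0 ω) ℙ)
    (hMom : ∀ p : ℕ, 1 ≤ p → Integrable (fun ω => |U 0 ω| ^ p) ℙ)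
    (C v : ℝ) (hC : 0 < C)
    (hMix : ∀ k h : ℕ, 1 ≤ h → ∀ A B : Set Ω,
      MeasurableSet[pastSigma U k] A → MeasurableSet[futureSigma U (k + h)] B →
      |(ℙ (A ∩ B)).toReal - (ℙ A).toReal * (ℙ B).toReal| ≤ C * (h : ℝ) ^ (-v))
    (hv : 2 < v) :
    ∃ C' > (0 : ℝ), ∀ n j : ℕ, 1 ≤ n → 1 ≤ j → j ≤ n →
      ∑ i ∈ Finset.range (n - j + 1), ∑ i' ∈ Finset.range (n - j + 1),
        (if i + j < i' then
          |∫ ω, (U (i + j) ω - U i ω) * (U (i' + j) ω - U i' ω) ∂ℙ| else 0)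
        ≤ C' * n :=
  cross_terms_sum_bound_general U hMeas hStat hMom C v hC hMix hv

end DepNoise
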